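/- Let θ ∈ ℝ and let a, b, A, B : ℂ → ℂ satisfy the symmetries under conjugation so that for a real λ the matrices J₁ = [[1, (b/a) e^{-2iθ}], [-(b̄/ā) e^{2iθ}, 1/(a ā)]], J₂ = [[a/ᾱ, 0], [-δ̄ e^{2iθ}, ᾱ/a]], J₃ = [[1/(α ᾱ), (β/ᾱ) e^{-2iθ}], [-(β̄/α) e^{2iθ}, 1]], J₄ = [[ā/α, δ e^{-2iθ}], [0, α/ā]] are defined (all denominators nonzero), where α = ā A - b̄ B, β = a B - b A, δ = ā β + b α, a ā - b b̄ = 1, A Ā - B B̄ = 1, with f̄ := conj(f) evaluated at the real point λ. Then J₁ = J₄ J₃⁻¹ J₂ (equivalently J₃ = J₂ J₁⁻¹ J₄). -/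

import Mathlib

/-!
The map `(A, B) ↦ (α, β) = (ā A - b̄ B, a B - b A)` multiplies the indefinite form `|A|² - |B|²`
by `|a|² - |b|² = 1`, so `α ᾱ - β β̄ = 1`. Hence `det J₃ = 1` and `J₃⁻¹` is the adjugate of `J₃`;
multiplying out `J₄ (adj J₃) J₂` and substituting `δ = ā β + b α` gives `J₁`. The phase `e^{2iθ}`
only enters through `e^{-2iθ} e^{2iθ} = 1`, and conjugation only as an involutive ring
homomorphism, so any field with a star structure and any nonzero phase `e` will do.
-/

open Complex ComplexConjugate Matrix

theorem Matrix.inv_eq_adjugate_of_det_eq_one {n R : Type*} [Fintype n] [DecidableEq n]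
    [CommRing R] {M : Matrix n n R} (h : M.det = 1) : M⁻¹ = M.adjugate := by
  rw [Matrix.inv_def, h, Ring.inverse_one, one_smul]

namespace JumpMatrix

variable {K : Type*} [Field K] [StarRing K]

theorem mul_conj_sub_mul_conj_of_transform (a b A B : K) :
    (conj a * A - conj b * B) * conj (conj a * A - conj b * B)
      - (a * B - b * A) * conj (a * B - b * A)
      = (a * conj a - b * conj b) * (A * conj A - B * conj B) := by
  simp only [map_sub, map_mul, conj_conj]
  ring

def J₁ (a b e : K) : Matrix (Fin 2) (Fin 2) K :=
  !![1, b / a * e⁻¹; -(conj b / conj a) * e, 1 / (a * conj a)]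

def J₂ (a α δ e : K) : Matrix (Fin 2) (Fin 2) K :=
  !![a / conj α, 0; -(conj δ) * e, conj α / a]

def J₃ (α β e : K) : Matrix (Fin 2) (Fin 2) K :=
  !![1 / (α * conj α), β / conj α * e⁻¹; -(conj β / α) * e, 1]

def J₄ (a α δ e : K) : Matrix (Fin 2) (Fin 2) K :=
  !![conj a / α, δ * e⁻¹; 0, α / conj a]

variable {a b α β δ e : K}

theorem det_J₃ (hα : α ≠ 0) (he : e ≠ 0) (hβ : β * conj β = α * conj α - 1) :
    (J₃ α β e).det = 1 := by
  have hα' : conj α ≠ 0 := (map_ne_zero _).2 hα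
  rw [J₃, det_fin_two_of]
  field_simp
  linear_combination hβ

theorem J₄_mul_adjugate_J₃_mul_J₂ (ha : a ≠ 0) (hα : α ≠ 0) (he : e ≠ 0)
    (hab : a * conj a - b * conj b = 1) (hβ : β * conj β = α * conj α - 1)
    (hδ : δ = conj a * β + b * α) :
    J₄ a α δ e * (J₃ α β e).adjugate * J₂ a α δ e = J₁ a b e := by
  have ha' : conj a ≠ 0 := (map_ne_zero _).2 ha
  have hα' : conj α ≠ 0 := (map_ne_zero _).2 hα
  have hδ' : conj δ = a * conj β + conj b * conj α := by
    simp only [hδ, map_add, map_mul, conj_conj]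
  rw [J₁, J₂, J₃, J₄, adjugate_fin_two_of, mul_fin_two, mul_fin_two]
  ext i j
  fin_cases i <;> fin_cases j <;>
    simp only [of_apply, cons_val', cons_val_zero, cons_val_one, cons_val_fin_one, Fin.isValue,
      Fin.zero_eta, Fin.mk_one, mul_zero, zero_mul, zero_add] <;>
    field_simp
  · linear_combination a * conj β * hδ - conj δ * hδ - b * α * hδ' + a * conj a * hβ
      + α * conj α * hab
  · linear_combination hδ
  · linear_combination -hδ'

end JumpMatrix

open JumpMatrix in
theorem jump_matrix_factorization_general (θ : ℝ) (a b A B α β δ : ℂ)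
    (ha : a ≠ 0) (hα : α ≠ 0)
    (hdet1 : a * conj a - b * conj b = 1)
    (hdet2 : A * conj A - B * conj B = 1)
    (hαdef : α = conj a * A - conj b * B)
    (hβdef : β = a * B - b * A)
    (hδdef : δ = conj a * β + b * α) :
    (!![1, b / a * Complex.exp (-(2 * Complex.I * θ));
        -(conj b / conj a) * Complex.exp (2 * Complex.I * θ),
        1 / (a * conj a)] : Matrix (Fin 2) (Fin 2) ℂ)
      = !![conj a / α, δ * Complex.exp (-(2 * Complex.I * θ)); 0, α / conj a] *
        (!![1 / (α * conj α), β / conj α * Complex.exp (-(2 * Complex.I * θ));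
            -(conj β / α) * Complex.exp (2 * Complex.I * θ), 1] : Matrix (Fin 2) (Fin 2) ℂ)⁻¹ *
        !![a / conj α, 0; -(conj δ) * Complex.exp (2 * Complex.I * θ), conj α / a] := by
  have hβ : β * conj β = α * conj α - 1 := by
    have h := mul_conj_sub_mul_conj_of_transform a b A B
    rw [← hαdef, ← hβdef, hdet1, hdet2, one_mul] at h
    linear_combination -h
  set e := Complex.exp (2 * Complex.I * θ)
  have he : e ≠ 0 := Complex.exp_ne_zero _
  rw [Complex.exp_neg]
  change J₁ a b e = J₄ a α δ e * (J₃ α β e)⁻¹ * J₂ a α δ e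
  rw [inv_eq_adjugate_of_det_eq_one (det_J₃ hα he hβ)]
  exact (J₄_mul_adjugate_J₃_mul_J₂ ha hα he hdet1 hβ hδdef).symm

/-- with the stated symmetries and determinant relations at a fixed real point,
`J₁ = J₄ J₃⁻¹ J₂`. -/
theorem jump_matrix_factorization (θ : ℝ) (a b A B α β δ : ℂ)
    (ha : a ≠ 0) (ha' : conj a ≠ 0) (hα : α ≠ 0) (hα' : conj α ≠ 0)
    (hdet1 : a * conj a - b * conj b = 1)
    (hdet2 : A * conj A - B * conj B = 1)
    (hαdef : α = conj a * A - conj b * B)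
    (hβdef : β = a * B - b * A)
    (hδdef : δ = conj a * β + b * α) :
    (!![1, b / a * Complex.exp (-(2 * Complex.I * θ));
        -(conj b / conj a) * Complex.exp (2 * Complex.I * θ),
        1 / (a * conj a)] : Matrix (Fin 2) (Fin 2) ℂ)
      = !![conj a / α, δ * Complex.exp (-(2 * Complex.I * θ)); 0, α / conj a] *
        (!![1 / (α * conj α), β / conj α * Complex.exp (-(2 * Complex.I * θ));
            -(conj β / α) * Complex.exp (2 * Complex.I * θ), 1] : Matrix (Fin 2) (Fin 2) ℂ)⁻¹ *
        !![a / conj α, 0; -(conj δ) * Complex.exp (2 * Complex.I * θ), conj α / a] :=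
  jump_matrix_factorization_general θ a b A B α β δ ha hα hdet1 hdet2 hαdef hβdef hδdef
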